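/- For the one-dimensional discrete Schrödinger operator with period-L potential taking value v at one site per period and 0 elsewhere, the Hill discriminant satisfies Δ_L(E) = 2·T_L(E/2) - v·U_{L-1}(E/2) for all L ≥ 1. -/
import Mathlib

open Matrix Polynomial

/-- The sparse `L`-periodic potential: value `v` at multiples of `L`, `0` elsewhere. -/
noncomputable def sparsePotential (L : ℕ) (v : ℂ) (n : ℕ) : ℂ :=
  if n % L = 0 then v else 0

/-- The one-step transfer matrix `A_n(E)`. -/
noncomputable def transferStep (L : ℕ) (v : ℂ) (E : ℂ) (n : ℕ) :
    Matrix (Fin 2) (Fin 2) ℂ :=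
  !![E - sparsePotential L v n, -1; 1, 0]

noncomputable def uu (E : ℂ) (n : ℤ) : ℂ := (Polynomial.Chebyshev.U ℂ n).eval (E / 2)

lemma uu_rec (E : ℂ) (n : ℤ) : uu E (n + 2) = E * uu E (n + 1) - uu E n := by
  simp only [uu, Polynomial.Chebyshev.U_add_two, eval_sub, eval_mul, eval_ofNat, eval_X]
  ring

lemma Bpow (E : ℂ) (m : ℕ) :
    (!![E, -1; 1, 0] : Matrix (Fin 2) (Fin 2) ℂ) ^ m =
      !![uu E m, -uu E (m - 1); uu E (m - 1), -uu E (m - 2)] := by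
  induction m with
  | zero =>
      simp only [pow_zero, Nat.cast_zero, zero_sub]
      rw [Matrix.one_fin_two]
      norm_num [uu, Polynomial.Chebyshev.U_neg_two, Polynomial.Chebyshev.U_neg_one,
        Polynomial.Chebyshev.U_zero]
  | succ m ih =>
      rw [pow_succ, ih]
      push_cast
      rw [show ((m:ℤ) + 1) - 1 = (m : ℤ) by ring, show ((m:ℤ) + 1) - 2 = (m : ℤ) - 1 by ring]
      have hr : uu E ((m : ℤ) + 1) = E * uu E m - uu E ((m:ℤ) - 1) := by
        have h := uu_rec E ((m : ℤ) - 1)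
        rw [show ((m:ℤ)-1)+2 = (m:ℤ)+1 by ring, show ((m:ℤ)-1)+1 = (m:ℤ) by ring] at h
        exact h
      have hr2 : uu E (m : ℤ) = E * uu E ((m:ℤ) - 1) - uu E ((m:ℤ) - 2) := by
        have h := uu_rec E ((m : ℤ) - 2)
        rw [show ((m:ℤ)-2)+2 = (m:ℤ) by ring, show ((m:ℤ)-2)+1 = (m:ℤ)-1 by ring] at h
        exact h
      have e1 : (-1 + (m:ℤ)) = (m:ℤ) - 1 := by ring
      have e2 : (-2 + (m:ℤ)) = (m:ℤ) - 2 := by ring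
      have e3 : (1 + (m:ℤ)) = (m:ℤ) + 1 := by ring
      ext i j
      fin_cases i <;> fin_cases j <;>
        simp [Matrix.mul_apply, Fin.sum_univ_two] <;>
        (try simp only [e1, e2, e3]) <;>
        first
          | ring1
          | linear_combination hr
          | linear_combination hr2
          | linear_combination -hr
          | linear_combination -hr2

theorem discriminant_eq_chebyshev (L : ℕ) (hL : 1 ≤ L) (v E : ℂ) :
    (((List.range L).map fun k => transferStep L v E (L - k)).prod).trace =
      2 * (Polynomial.Chebyshev.T ℂ L).eval (E / 2)
        - v * (Polynomial.Chebyshev.U ℂ (L - 1)).eval (E / 2) := by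
  obtain ⟨m, rfl⟩ : ∃ m, L = m + 1 := ⟨L - 1, (Nat.succ_pred_eq_of_pos hL).symm⟩
  -- decompose the list
  have hlist : ((List.range (m + 1)).map fun k => transferStep (m+1) v E (m + 1 - k))
      = transferStep (m+1) v E (m+1) ::
        List.replicate m (!![E, -1; 1, 0] : Matrix (Fin 2) (Fin 2) ℂ) := by
    rw [List.range_succ_eq_map, List.map_cons, List.map_map]
    congr 1
    refine List.eq_replicate_iff.mpr ⟨by simp, ?_⟩
    intro x hx
    obtain ⟨k, hk, rfl⟩ := List.mem_map.mp hx
    have hk' : k < m := List.mem_range.mp hk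
    have h0 : m + 1 - Nat.succ k = m - k := by omega
    have hlt : m - k < m + 1 := by omega
    simp only [Function.comp, transferStep, sparsePotential, h0]
    rw [Nat.mod_eq_of_lt hlt, if_neg (by omega), sub_zero]
  rw [hlist, List.prod_cons, List.prod_replicate, Bpow]
  have hA : transferStep (m+1) v E (m+1) = !![E - v, -1; 1, 0] := by
    simp [transferStep, sparsePotential]
  rw [hA]
  have hm2 : (m : ℤ) - 2 = ((m:ℤ) - 1) - 1 := by ring
  have hT : 2 * (Polynomial.Chebyshev.T ℂ (m+1)).eval (E / 2)
      = E * uu E m - 2 * uu E ((m:ℤ) - 1) := by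
    have h1 := Polynomial.Chebyshev.T_eq_U_sub_X_mul_U ℂ (m+1)
    have h2 := Polynomial.Chebyshev.U_add_two ℂ ((m:ℤ) - 1)
    have e1 : ((m:ℤ) + 1) - 1 = (m:ℤ) := by ring
    have e2 : ((m:ℤ) - 1) + 2 = (m:ℤ) + 1 := by ring
    have e3 : ((m:ℤ) - 1) + 1 = (m:ℤ) := by ring
    rw [e2, e3] at h2
    have : Polynomial.Chebyshev.T ℂ ((m:ℤ)+1)
        = Polynomial.Chebyshev.U ℂ ((m:ℤ)+1) - X * Polynomial.Chebyshev.U ℂ (m:ℤ) := by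
      rw [h1, e1]
    rw [this, h2]
    simp only [uu, eval_sub, eval_mul, eval_ofNat, eval_X]
    ring
  push_cast
  rw [show ((m:ℤ) + 1) - 1 = (m : ℤ) by ring, hT]
  rw [Matrix.trace_fin_two]
  simp [Matrix.mul_apply, Fin.sum_univ_two, uu]
  ring
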